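/- arXiv:2007.04757 — 3 statements merged into one kernel-verified Lean document; each statement's English description precedes it below -/
import Mathlib

section
/- Let q_0 = 1 < q_1 < ... < q_g be positive integers with q_i | q_{i+1} for all i, and suppose g ≥ 1. Then for any index 1 ≤ j ≤ g, we have q_g - q_j + q_{j-1} ≥ q_{g-1}, with strict inequality whenever j < g. -/
/-!
Write `a = q (g - 1)` and `b = q g`. For `j = g` both sides equal `a`. For `j < g` the chain is
increasing, so `q j ≤ a`, and `a` is a proper divisor of `b`, so `b ≥ 2 a`; hence
`b - q j + q (j - 1) ≥ a + q (j - 1) > a`, because `q (j - 1)` properly divides `q j` and is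
therefore positive.
-/

namespace Nat

theorem two_mul_le_of_dvd_of_lt {a b : ℕ} (hdvd : a ∣ b) (hlt : a < b) : 2 * a ≤ b := by
  obtain ⟨c, rfl⟩ := hdvd
  have hc : 2 ≤ c := by
    by_contra! hc
    interval_cases c <;> omega
  rw [mul_comm]
  exact Nat.mul_le_mul_left a hc

end Nat

theorem stmt1_general (g : ℕ) (q : ℕ → ℕ)
    (hlt : ∀ i < g, q i < q (i + 1)) (hdvd : ∀ i < g, q i ∣ q (i + 1))
    (j : ℕ) (hjg : j ≤ g) :
    q (g - 1) ≤ q g - q j + q (j - 1) ∧ (j < g → q (g - 1) < q g - q j + q (j - 1)) := by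
  rcases hjg.eq_or_lt with rfl | hjg
  · omega
  have hmono : MonotoneOn q (Set.Iic g) :=
    (strictMonoOn_Iic_of_lt_succ fun m hm ↦ by simpa using hlt m hm).monotoneOn
  have hqj : q j ≤ q (g - 1) :=
    hmono (Set.mem_Iic.2 (by omega)) (Set.mem_Iic.2 (by omega)) (by omega)
  have hg : g - 1 + 1 = g := by omega
  have hdouble : 2 * q (g - 1) ≤ q g :=
    hg ▸ Nat.two_mul_le_of_dvd_of_lt (hdvd (g - 1) (by omega)) (hlt (g - 1) (by omega))
  have hpos : 0 < q (j - 1) :=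
    Nat.pos_of_dvd_of_pos (hdvd (j - 1) (by omega)) (Nat.zero_lt_of_lt (hlt (j - 1) (by omega)))
  omega

/-- For a divisibility chain `q 0 = 1 < q 1 < ... < q g` with `g ≥ 1` and any
`1 ≤ j ≤ g`, we have `q g - q j + q (j-1) ≥ q (g-1)`, strict whenever `j < g`. -/
theorem stmt1 (g : ℕ) (q : ℕ → ℕ) (hg : 1 ≤ g) (h0 : q 0 = 1)
    (hlt : ∀ i < g, q i < q (i + 1)) (hdvd : ∀ i < g, q i ∣ q (i + 1))
    (j : ℕ) (hj1 : 1 ≤ j) (hjg : j ≤ g) :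
    q (g - 1) ≤ q g - q j + q (j - 1) ∧ (j < g → q (g - 1) < q g - q j + q (j - 1)) :=
  stmt1_general g q hlt hdvd j hjg
end

section
/- The curve γ(t) = (t^4, t^6·u(t)), where u is a formal power series with u(t)² = 1 + t and u(0) = 1, is invariant under the vector field X = 8xy·∂/∂x + (13y² − x³)·∂/∂y: the pullback along γ satisfies the proportionality X(γ(t))·(dγ/dt components cross product) = 0, i.e. 8·x(t)·y(t)·y'(t) − (13·y(t)² − x(t)³)·x'(t) = 0. -/
/-!
Differentiating `u² = 1 + t` gives `2uu' = 1`. Expanding the derivatives of `t⁴` and `t⁶u`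
and substituting `2uu' = 1`, the expression collapses to `4t¹⁵(1 + t - u²)`, which vanishes.
-/

open PowerSeries
open scoped PowerSeries

namespace PowerSeries

variable {R : Type*} [CommRing R]

theorem two_mul_mul_derivative_eq_one_of_sq_eq_one_add_X {u : R⟦X⟧} (hu : u ^ 2 = 1 + X) :
    2 * u * d⁄dX R u = 1 := by
  have h := congrArg (d⁄dX R) hu
  rw [Derivation.leibniz_pow, map_add, Derivation.map_one_eq_zero, derivative_X, zero_add,
    smul_eq_mul] at h
  linear_combination h

theorem curve_invariant_of_sq_eq_one_add_X {u : R⟦X⟧} (hu : u ^ 2 = 1 + X) :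
    8 * (X ^ 4 : R⟦X⟧) * (X ^ 6 * u) * d⁄dX R (X ^ 6 * u) -
      (13 * (X ^ 6 * u) ^ 2 - (X ^ 4 : R⟦X⟧) ^ 3) * d⁄dX R (X ^ 4 : R⟦X⟧) = 0 := by
  have hu' := two_mul_mul_derivative_eq_one_of_sq_eq_one_add_X hu
  simp only [Derivation.leibniz, Derivation.leibniz_pow, derivative_X, smul_eq_mul, mul_one]
  linear_combination (-4 * (X : R⟦X⟧) ^ 15) * hu + 4 * (X : R⟦X⟧) ^ 16 * hu'

end PowerSeries

theorem stmt10_general (u : ℂ⟦X⟧) (hu : u ^ 2 = 1 + PowerSeries.X) :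
    8 * (PowerSeries.X ^ 4 : ℂ⟦X⟧) * (PowerSeries.X ^ 6 * u) *
        (d⁄dX ℂ) (PowerSeries.X ^ 6 * u) -
      (13 * (PowerSeries.X ^ 6 * u) ^ 2 - (PowerSeries.X ^ 4 : ℂ⟦X⟧) ^ 3) *
        (d⁄dX ℂ) (PowerSeries.X ^ 4 : ℂ⟦X⟧) = 0 :=
  curve_invariant_of_sq_eq_one_add_X hu

/-- With `x(t) = t^4` and `y(t) = t^6·u(t)` where `u² = 1 + t`, `u(0) = 1`
(as formal power series), the curve is invariant under `X = 8xy·∂/∂x + (13y² - x³)·∂/∂y`: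
`8·x·y·y' - (13y² - x³)·x' = 0`. -/
theorem stmt10 (u : ℂ⟦X⟧) (hu : u ^ 2 = 1 + PowerSeries.X)
    (hu0 : PowerSeries.constantCoeff u = 1) :
    8 * (PowerSeries.X ^ 4 : ℂ⟦X⟧) * (PowerSeries.X ^ 6 * u) *
        (d⁄dX ℂ) (PowerSeries.X ^ 6 * u) -
      (13 * (PowerSeries.X ^ 6 * u) ^ 2 - (PowerSeries.X ^ 4 : ℂ⟦X⟧) ^ 3) *
        (d⁄dX ℂ) (PowerSeries.X ^ 4 : ℂ⟦X⟧) = 0 :=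
  stmt10_general u hu
end

section
/- Let q_0 = 1 < q_1 < ... < q_g with q_i | q_{i+1}, g ≥ 1. For any (possibly empty) set of bad indices j_1 < ... < j_p in {1,...,g}, the quantity B := q_g − q_{j_p} + Σ_{l=1}^{p} q_{j_l − 1} (with B := q_g when p = 0) satisfies B ≥ q_{g-1}, and B = q_{g-1} only if p = 1 and j_1 = g. -/
/-- For a divisibility chain `q 0 = 1 < ... < q g`, `g ≥ 1`, and a (possibly
empty) configuration of bad indices `1 ≤ j 1 < ... < j p ≤ g`, the quantity
`B = q g - q (j p) + ∑_{l=1}^p q (j l - 1)` (with `B = q g` when `p = 0`) satisfies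
`B ≥ q (g-1)`, with equality only if `p = 1` and `j 1 = g`. -/
theorem stmt15 (g p : ℕ) (q : ℕ → ℕ) (h0 : q 0 = 1) (hg : 1 ≤ g)
    (hlt : ∀ i < g, q i < q (i + 1)) (hdvd : ∀ i < g, q i ∣ q (i + 1))
    (j : ℕ → ℕ) (hmono : ∀ l, 1 ≤ l → l < p → j l < j (l + 1))
    (hrange : ∀ l, 1 ≤ l → l ≤ p → 1 ≤ j l ∧ j l ≤ g)
    (B : ℕ)
    (hB : B = if p = 0 then q g else q g - q (j p) + ∑ l ∈ Finset.Icc 1 p, q (j l - 1)) :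
    q (g - 1) ≤ B ∧ (B = q (g - 1) → p = 1 ∧ j 1 = g) := by
  -- monotonicity
  have hq_mono : ∀ a b, a ≤ b → b ≤ g → q a ≤ q b := by
    intro a b hab hbg
    induction b with
    | zero => simp [Nat.le_zero.mp hab]
    | succ n ih =>
      rcases Nat.lt_or_ge a (n + 1) with h | h
      · exact le_trans (ih (Nat.lt_succ_iff.mp h) (le_trans (Nat.le_succ n) hbg))
          (le_of_lt (hlt n hbg))
      · have : a = n + 1 := le_antisymm hab h
        simp [this]
  have hq_pos : ∀ i, i ≤ g → 1 ≤ q i := by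
    intro i hi
    calc 1 = q 0 := h0.symm
    _ ≤ q i := hq_mono 0 i (Nat.zero_le i) hi
  have hq_dvd : ∀ a b, a ≤ b → b ≤ g → q a ∣ q b := by
    intro a b hab hbg
    induction b with
    | zero => simp [Nat.le_zero.mp hab]
    | succ n ih =>
      rcases Nat.lt_or_ge a (n + 1) with h | h
      · exact dvd_trans (ih (Nat.lt_succ_iff.mp h) (le_trans (Nat.le_succ n) hbg))
          (hdvd n hbg)
      · have : a = n + 1 := le_antisymm hab h
        simp [this]
  have hg1 : g - 1 + 1 = g := Nat.succ_pred_eq_of_pos hg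
  have hg1lt : g - 1 < g := Nat.sub_lt hg one_pos
  have hqlt : q (g - 1) < q g := by
    have := hlt (g - 1) hg1lt
    rwa [hg1] at this
  have htwo : 2 * q (g - 1) ≤ q g := by
    obtain ⟨k, hk⟩ := hq_dvd (g - 1) g (le_of_lt hg1lt) le_rfl
    have hpos := hq_pos (g - 1) (le_of_lt hg1lt)
    have hk2 : 2 ≤ k := by
      by_contra h
      interval_cases k <;> omega
    calc 2 * q (g - 1) ≤ q (g - 1) * k := by nlinarith
    _ = q g := hk.symm
  by_cases hp : p = 0
  · subst hp
    rw [if_pos rfl] at hB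
    subst hB
    exact ⟨le_of_lt hqlt, fun h => absurd h (ne_of_gt hqlt)⟩
  · -- p ≥ 1
    have hp1 : 1 ≤ p := Nat.one_le_iff_ne_zero.mpr hp
    rw [if_neg hp] at hB
    obtain ⟨hjp1, hjpg⟩ := hrange p hp1 le_rfl
    -- split off top term
    have hsplit : ∑ l ∈ Finset.Icc 1 p, q (j l - 1)
        = (∑ l ∈ Finset.Icc 1 (p - 1), q (j l - 1)) + q (j p - 1) := by
      have : p = (p - 1) + 1 := (Nat.succ_pred_eq_of_pos hp1).symm
      rw [this, Finset.sum_Icc_succ_top (by omega)]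
      rw [← this]
    have hrest : p - 1 ≤ ∑ l ∈ Finset.Icc 1 (p - 1), q (j l - 1) := by
      have := Finset.card_nsmul_le_sum (Finset.Icc 1 (p - 1)) (fun l => q (j l - 1)) 1
        (by
          intro x hx
          simp only [Finset.mem_Icc] at hx
          exact hq_pos (j x - 1) (by
            have := (hrange x hx.1 (by omega)).2
            omega))
      simpa [Nat.card_Icc] using this
    rcases eq_or_lt_of_le hjpg with hjg | hjg
    · -- j p = g
      have hterm : q (j p - 1) = q (g - 1) := by rw [hjg]
      have hBeq : B = (∑ l ∈ Finset.Icc 1 (p - 1), q (j l - 1)) + q (g - 1) := by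
        rw [hB, hsplit, hterm, hjg, Nat.sub_self, zero_add]
      constructor
      · omega
      · intro hEq
        have hrest0 : ∑ l ∈ Finset.Icc 1 (p - 1), q (j l - 1) = 0 := by omega
        have hpone : p = 1 := by omega
        exact ⟨hpone, by rw [← hpone]; exact hjg⟩
    · -- j p < g
      have hle : q (j p) ≤ q (g - 1) := hq_mono (j p) (g - 1) (by omega) (le_of_lt hg1lt)
      have hterm1 : 1 ≤ q (j p - 1) := hq_pos (j p - 1) (by omega)
      have hsub : q (g - 1) ≤ q g - q (j p) := by omega
      have hstrict : q (g - 1) + 1 ≤ B := by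
        rw [hB, hsplit]
        omega
      exact ⟨by omega, by omega⟩
end
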